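/- Let μ < 0, a = √(-μ), and let r be a complex number with sinh(a·r) ≠ 0. If λ := a·coth(a·r) is a real number with |λ| > a, then λ = a·coth(a·Re r) and there exists an integer k such that r = Re r + k·(π i / a). -/

import Mathlib

open Complex Real

/-!
Write `a r = x + i y`. Comparing imaginary parts in `λ sinh(x + i y) = a cosh(x + i y)` gives
`(λ cosh x - a sinh x) sin y = 0`; since `|sinh x| < cosh x`, the factor `λ cosh x - a sinh x`
cannot vanish when `|λ| > a`, so `sin y = 0`, i.e. `y ∈ πℤ`. Then `cos y = ±1`, and the real
parts give `λ sinh x = a cosh x`.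
-/

namespace Complex

lemma sinh_re (z : ℂ) : (sinh z).re = Real.sinh z.re * Real.cos z.im := by
  conv_lhs => rw [← re_add_im z]
  rw [sinh_add, cosh_mul_I, sinh_mul_I]
  simp [sinh_ofReal_re, cosh_ofReal_re, sin_ofReal_re, cos_ofReal_re]

lemma sinh_im (z : ℂ) : (sinh z).im = Real.cosh z.re * Real.sin z.im := by
  conv_lhs => rw [← re_add_im z]
  rw [sinh_add, cosh_mul_I, sinh_mul_I]
  simp [sinh_ofReal_re, cosh_ofReal_re, sin_ofReal_re, cos_ofReal_re]

lemma cosh_re (z : ℂ) : (cosh z).re = Real.cosh z.re * Real.cos z.im := by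
  conv_lhs => rw [← re_add_im z]
  rw [cosh_add, cosh_mul_I, sinh_mul_I]
  simp [sinh_ofReal_re, cosh_ofReal_re, sin_ofReal_re, cos_ofReal_re]

lemma cosh_im (z : ℂ) : (cosh z).im = Real.sinh z.re * Real.sin z.im := by
  conv_lhs => rw [← re_add_im z]
  rw [cosh_add, cosh_mul_I, sinh_mul_I]
  simp [sinh_ofReal_re, cosh_ofReal_re, sin_ofReal_re, cos_ofReal_re]

variable {a lam : ℝ} {z : ℂ}

lemma mul_sinh_eq_mul_cosh_of_eq_div (hlam : (lam : ℂ) = a * cosh z / sinh z)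
    (habs : |a| < |lam|) : lam * sinh z = a * cosh z := by
  have hsinh : sinh z ≠ 0 := by
    rintro h
    rw [h, div_zero, ofReal_eq_zero] at hlam
    simp only [hlam, abs_zero] at habs
    exact (abs_nonneg a).not_gt habs
  rw [eq_div_iff hsinh] at hlam
  linear_combination hlam

lemma sin_im_eq_zero_of_mul_sinh_eq_mul_cosh (h : lam * sinh z = a * cosh z)
    (habs : |a| < |lam|) : Real.sin z.im = 0 := by
  by_contra hsin
  have him : lam * Real.cosh z.re = a * Real.sinh z.re := by
    have := congrArg im h
    simp only [im_ofReal_mul, sinh_im, cosh_im] at this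
    exact mul_right_cancel₀ hsin (by linear_combination this)
  have hcosh := Real.cosh_pos z.re
  have habs_sinh : |Real.sinh z.re| < Real.cosh z.re := by
    rw [Real.abs_sinh, ← Real.cosh_abs]
    exact Real.sinh_lt_cosh _
  have := congrArg abs him
  rw [abs_mul, abs_mul, abs_of_pos hcosh] at this
  nlinarith [abs_nonneg a]

lemma mul_sinh_re_eq_mul_cosh_re (h : lam * sinh z = a * cosh z) (hsin : Real.sin z.im = 0) :
    lam * Real.sinh z.re = a * Real.cosh z.re := by
  have hcos : Real.cos z.im ≠ 0 := by
    intro hcos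
    simpa [hsin, hcos] using Real.sin_sq_add_cos_sq z.im
  have := congrArg re h
  simp only [re_ofReal_mul, sinh_re, cosh_re] at this
  exact mul_right_cancel₀ hcos (by linear_combination this)

lemma exists_int_eq_re_add_mul_pi_I_div (ha : a ≠ 0) {r : ℂ} (h : Real.sin (a * r.im) = 0) :
    ∃ k : ℤ, r = r.re + k * (π * I / a) := by
  obtain ⟨k, hk⟩ := Real.sin_eq_zero_iff.mp h
  refine ⟨k, ?_⟩
  have him : r.im = k * π / a := by
    field_simp
    linarith
  conv_lhs => rw [← re_add_im r, him]
  push_cast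
  field_simp

end Complex

theorem stmt_9_general (mu : ℝ) (r : ℂ)
    (lam : ℝ)
    (hlam : (lam : ℂ) =
      (Real.sqrt (-mu) : ℂ) * Complex.cosh ((Real.sqrt (-mu) : ℂ) * r) /
        Complex.sinh ((Real.sqrt (-mu) : ℂ) * r))
    (habs : Real.sqrt (-mu) < |lam|) :
    lam = Real.sqrt (-mu) * Real.cosh (Real.sqrt (-mu) * r.re) /
        Real.sinh (Real.sqrt (-mu) * r.re) ∧
    ∃ k : ℤ, r = (r.re : ℂ) + (k : ℂ) * (Real.pi * Complex.I / (Real.sqrt (-mu) : ℂ)) := by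
  set a := Real.sqrt (-mu)
  have habs' : |a| < |lam| := by rwa [abs_of_nonneg (Real.sqrt_nonneg _)]
  have h := Complex.mul_sinh_eq_mul_cosh_of_eq_div hlam habs'
  have hsin := Complex.sin_im_eq_zero_of_mul_sinh_eq_mul_cosh h habs'
  have hre := Complex.mul_sinh_re_eq_mul_cosh_re h hsin
  rw [Complex.re_ofReal_mul] at hre
  rw [Complex.im_ofReal_mul] at hsin
  have ha : a ≠ 0 := by
    rintro ha
    rw [ha, ofReal_zero, zero_mul, zero_div, ofReal_eq_zero] at hlam
    rw [ha, hlam, abs_zero] at habs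
    exact habs.false
  have hsinh : Real.sinh (a * r.re) ≠ 0 := by
    intro h0
    rw [h0, mul_zero] at hre
    exact ha (by simpa [(Real.cosh_pos _).ne'] using hre.symm)
  exact ⟨by rw [eq_div_iff hsinh]; linarith, Complex.exists_int_eq_re_add_mul_pi_I_div ha hsin⟩

theorem stmt_9 (mu : ℝ) (hmu : mu < 0) (r : ℂ)
    (hsinh : Complex.sinh ((Real.sqrt (-mu) : ℂ) * r) ≠ 0)
    (lam : ℝ)
    (hlam : (lam : ℂ) =
      (Real.sqrt (-mu) : ℂ) * Complex.cosh ((Real.sqrt (-mu) : ℂ) * r) /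
        Complex.sinh ((Real.sqrt (-mu) : ℂ) * r))
    (habs : Real.sqrt (-mu) < |lam|) :
    lam = Real.sqrt (-mu) * Real.cosh (Real.sqrt (-mu) * r.re) /
        Real.sinh (Real.sqrt (-mu) * r.re) ∧
    ∃ k : ℤ, r = (r.re : ℂ) + (k : ℂ) * (Real.pi * Complex.I / (Real.sqrt (-mu) : ℂ)) :=
  stmt_9_general mu r lam hlam habs
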